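/- arXiv:math/9606207 — 4 statements merged into one kernel-verified Lean document; each statement's English description precedes it below -/
import Mathlib

section
/- Let γ, δ be ordinals and let f : δ → γ have finite support {ξ₁ > ξ₂ > ⋯ > ξ_k} listed in strictly decreasing order. Then the rank of f in the anti-lexicographic well-order on finite-support functions δ → γ equals γ^{ξ₁}·f(ξ₁) + γ^{ξ₂}·f(ξ₂) + ⋯ + γ^{ξ_k}·f(ξ_k), where all operations are ordinal arithmetic. -/
noncomputable section

/-- Finite-support functions from δ to γ, represented as finitely supported functions
`Ordinal →₀ Ordinal` with support contained in δ and values below γ on δ. -/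
def FF (γ δ : Ordinal) :=
  {f : Ordinal →₀ Ordinal // (∀ ξ ∈ f.support, ξ < δ) ∧ (∀ ξ : Ordinal, ξ < δ → f ξ < γ)}

/-- The anti-lexicographic order: `f < g` iff `f ξ < g ξ` at the greatest `ξ` where
`f` and `g` differ. -/
def Flt (γ δ : Ordinal) (f g : FF γ δ) : Prop :=
  ∃ ξ : Ordinal, f.1 ξ < g.1 ξ ∧ ∀ η : Ordinal, ξ < η → f.1 η = g.1 η

section Aux

open Ordinal List

def ffval (γ : Ordinal) (f : Ordinal →₀ Ordinal) (l : List Ordinal) : Ordinal :=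
  (l.map fun ξ => γ ^ ξ * f ξ).foldr (· + ·) 0

@[simp] lemma ffval_nil (γ : Ordinal) (f : Ordinal →₀ Ordinal) : ffval γ f [] = 0 := rfl

@[simp] lemma ffval_cons (γ : Ordinal) (f : Ordinal →₀ Ordinal) (a : Ordinal) (l : List Ordinal) :
    ffval γ f (a :: l) = γ ^ a * f a + ffval γ f l := rfl

lemma ffval_congr {γ : Ordinal} {f g : Ordinal →₀ Ordinal} {l : List Ordinal}
    (h : ∀ ξ ∈ l, f ξ = g ξ) : ffval γ f l = ffval γ g l := by
  unfold ffval
  rw [List.map_congr_left fun a ha => by rw [h a ha]]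

lemma sorted_gt_eq_of_toFinset_eq {l₁ l₂ : List Ordinal} (h₁ : l₁.Pairwise (· > ·))
    (h₂ : l₂.Pairwise (· > ·)) (h : l₁.toFinset = l₂.toFinset) : l₁ = l₂ := by
  haveI : Std.Antisymm (· > · : Ordinal → Ordinal → Prop) := ⟨fun a b h h' => absurd h' (asymm h)⟩
  refine List.Perm.eq_of_pairwise' h₁ h₂ ?_
  rw [List.perm_ext_iff_of_nodup h₁.nodup h₂.nodup]
  intro a
  rw [← List.mem_toFinset, ← List.mem_toFinset, h]

lemma ffval_lt_opow {γ : Ordinal} (hγ : 0 < γ) (f : Ordinal →₀ Ordinal) :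
    ∀ (l : List Ordinal) (b : Ordinal), l.Pairwise (· > ·) → (∀ ξ ∈ l, ξ < b) →
    (∀ ξ ∈ l, f ξ < γ) → ffval γ f l < γ ^ b
  | [], b, _, _, _ => by simpa using opow_pos b hγ
  | a :: l, b, hs, hb, hv => by
    have ih : ffval γ f l < γ ^ a :=
      ffval_lt_opow hγ f l a hs.of_cons (fun _ => List.rel_of_pairwise_cons hs)
        (fun ξ hξ => hv ξ (List.mem_cons_of_mem a hξ))
    have h1 : ffval γ f (a :: l) < γ ^ a * (f a + 1) := by
      rw [ffval_cons, add_one_eq_succ, mul_succ]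
      exact add_lt_add_right ih _
    have h2 : γ ^ a * (f a + 1) ≤ γ ^ a * γ := by
      refine mul_le_mul_right ?_ _
      rw [add_one_eq_succ, Order.succ_le_iff]
      exact hv a (List.mem_cons_self)
    have h3 : γ ^ a * γ ≤ γ ^ b := by
      rw [← opow_succ]
      exact opow_le_opow_right hγ (Order.succ_le_iff.2 (hb a (List.mem_cons_self)))
    exact h1.trans_le (h2.trans h3)

/-- Main comparison lemma for the anti-lexicographic order. -/
lemma ffval_main {γ : Ordinal} (f g : Ordinal →₀ Ordinal) (ξ : Ordinal)
    (hfg : f ξ < g ξ) (hagree : ∀ η, ξ < η → f η = g η) :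
    ∀ (lg lf : List Ordinal) (B : Ordinal), lf.Pairwise (· > ·) → lg.Pairwise (· > ·) →
      (∀ η, η ∈ lf ↔ f η ≠ 0 ∧ η < B) → (∀ η, η ∈ lg ↔ g η ≠ 0 ∧ η < B) →
      (∀ η ∈ lf, f η < γ) → (∀ η ∈ lg, g η < γ) → ξ < B →
      ffval γ f lf < ffval γ g lg
  | [], lf, B, _, _, _, hlg, _, _, hξB => by
    exact absurd ((hlg ξ).2 ⟨(hfg.trans_le' zero_le).ne', hξB⟩) (List.not_mem_nil)
  | a :: lg', lf, B, hsf, hsg, hlf, hlg, hvf, hvg, hξB => by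
    have hgξ0 : g ξ ≠ 0 := (hfg.trans_le' zero_le).ne'
    have hξmem : ξ ∈ a :: lg' := (hlg ξ).2 ⟨hgξ0, hξB⟩
    have hγ : 0 < γ := zero_le.trans_lt (hvg ξ hξmem)
    have hξa : ξ ≤ a := by
      rcases List.mem_cons.1 hξmem with h | h
      · exact h.le
      · exact (List.rel_of_pairwise_cons hsg h).le
    -- elements of lf are ≤ a
    have hlfa : ∀ ζ ∈ lf, ζ ≤ a := by
      intro ζ hζ
      by_contra hc
      push_neg at hc
      have hζξ : ξ < ζ := hξa.trans_lt hc
      have hζg : ζ ∈ a :: lg' := by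
        refine (hlg ζ).2 ⟨?_, ((hlf ζ).1 hζ).2⟩
        rw [← hagree ζ hζξ]
        exact ((hlf ζ).1 hζ).1
      rcases List.mem_cons.1 hζg with h | h
      · exact absurd h hc.ne'
      · exact absurd (List.rel_of_pairwise_cons hsg h) (asymm hc)
    rcases lt_or_eq_of_le hξa with hlt | rfl
    · -- head a > ξ : both lists start with a, same coefficient
      have hfa0 : f a ≠ 0 := by
        rw [hagree a hlt]; exact ((hlg a).1 (List.mem_cons_self)).1
      have haf : a ∈ lf := (hlf a).2 ⟨hfa0, ((hlg a).1 (List.mem_cons_self)).2⟩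
      obtain ⟨c, lf', rfl⟩ : ∃ c lf', lf = c :: lf' := by
        cases lf with
        | nil => exact absurd haf (List.not_mem_nil)
        | cons c lf' => exact ⟨c, lf', rfl⟩
      have hca : c = a := by
        rcases List.mem_cons.1 haf with h | h
        · exact h.symm
        · exact absurd (List.rel_of_pairwise_cons hsf h)
            (not_lt.2 (hlfa c (List.mem_cons_self)))
      subst hca
      rw [ffval_cons, ffval_cons, hagree c hlt]
      refine add_lt_add_right ?_ _
      refine ffval_main f g ξ hfg hagree lg' lf' c hsf.of_cons hsg.of_cons ?_ ?_
        (fun η hη => hvf η (List.mem_cons_of_mem c hη))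
        (fun η hη => hvg η (List.mem_cons_of_mem c hη)) hlt
      · intro η
        constructor
        · intro hη
          exact ⟨((hlf η).1 (List.mem_cons_of_mem c hη)).1, List.rel_of_pairwise_cons hsf hη⟩
        · rintro ⟨h0, hηc⟩
          have : η ∈ c :: lf' := (hlf η).2 ⟨h0, hηc.trans (((hlg c).1 (List.mem_cons_self)).2)⟩
          rcases List.mem_cons.1 this with h | h
          · exact absurd h hηc.ne
          · exact h
      · intro η
        constructor
        · intro hη
          exact ⟨((hlg η).1 (List.mem_cons_of_mem c hη)).1, List.rel_of_pairwise_cons hsg hη⟩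
        · rintro ⟨h0, hηc⟩
          have : η ∈ c :: lg' := (hlg η).2 ⟨h0, hηc.trans (((hlg c).1 (List.mem_cons_self)).2)⟩
          rcases List.mem_cons.1 this with h | h
          · exact absurd h hηc.ne
          · exact h
    · -- head of lg is ξ itself
      have hkey : ffval γ f lf < γ ^ ξ * (f ξ + 1) := by
        have hbound : ∀ l', l'.Pairwise (· > ·) → (∀ ζ ∈ l', ζ < ξ) → (∀ ζ ∈ l', f ζ < γ) →
            ffval γ f l' < γ ^ ξ := fun l' hs hb hv => ffval_lt_opow hγ f l' ξ hs hb hv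
        cases lf with
        | nil =>
          rw [ffval_nil]
          exact mul_pos (opow_pos ξ hγ) (by simpa using Ordinal.succ_pos (f ξ))
        | cons c lf' =>
          rcases lt_or_eq_of_le (hlfa c (List.mem_cons_self)) with hcξ | rfl
          · have hfξ : f ξ = 0 := by
              by_contra h0
              have : ξ ∈ c :: lf' := (hlf ξ).2 ⟨h0, hξB⟩
              rcases List.mem_cons.1 this with h | h
              · exact absurd h hcξ.ne'
              · exact absurd (List.rel_of_pairwise_cons hsf h) (not_lt.2 hcξ.le)
            rw [hfξ, zero_add, mul_one]
            refine hbound (c :: lf') hsf ?_ hvf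
            intro ζ hζ
            rcases List.mem_cons.1 hζ with h | h
            · exact h ▸ hcξ
            · exact (List.rel_of_pairwise_cons hsf h).trans hcξ
          · rw [ffval_cons, add_one_eq_succ, mul_succ]
            refine add_lt_add_right ?_ _
            exact hbound lf' hsf.of_cons (fun _ => List.rel_of_pairwise_cons hsf)
              (fun ζ hζ => hvf ζ (List.mem_cons_of_mem c hζ))
      have h2 : γ ^ ξ * (f ξ + 1) ≤ γ ^ ξ * g ξ := by
        refine mul_le_mul_right ?_ _
        rw [add_one_eq_succ, Order.succ_le_iff]
        exact hfg
      calc ffval γ f lf < γ ^ ξ * (f ξ + 1) := hkey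
        _ ≤ γ ^ ξ * g ξ := h2
        _ ≤ γ ^ ξ * g ξ + ffval γ g lg' := le_self_add
        _ = ffval γ g (ξ :: lg') := (ffval_cons _ _ _ _).symm

/-- Canonical decreasing list of support elements. -/
def clist (f : Ordinal →₀ Ordinal) : List Ordinal := (f.support.sort (· ≤ ·)).reverse

lemma clist_sorted (f : Ordinal →₀ Ordinal) : (clist f).Pairwise (· > ·) := by
  rw [clist, List.pairwise_reverse]
  exact (Finset.sortedLT_sort _).pairwise

lemma clist_toFinset (f : Ordinal →₀ Ordinal) : (clist f).toFinset = f.support := by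
  rw [clist, List.toFinset_reverse, Finset.sort_toFinset]

lemma clist_eq {f : Ordinal →₀ Ordinal} {l : List Ordinal} (hs : l.Pairwise (· > ·))
    (h : l.toFinset = f.support) : l = clist f :=
  sorted_gt_eq_of_toFinset_eq hs (clist_sorted f) (h.trans (clist_toFinset f).symm)

def ffR (γ δ : Ordinal) (f : FF γ δ) : Ordinal := ffval γ f.1 (clist f.1)

lemma ffR_eq (γ δ : Ordinal) (f : FF γ δ) {l : List Ordinal} (hs : l.Pairwise (· > ·))
    (h : l.toFinset = f.1.support) : ffR γ δ f = ffval γ f.1 l := by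
  rw [ffR, clist_eq hs h]

lemma mem_clist_iff {γ δ : Ordinal} (f : FF γ δ) (η : Ordinal) :
    η ∈ clist f.1 ↔ f.1 η ≠ 0 ∧ η < δ := by
  rw [← List.mem_toFinset, clist_toFinset, Finsupp.mem_support_iff]
  exact ⟨fun h => ⟨h, f.2.1 η (Finsupp.mem_support_iff.2 h)⟩, fun h => h.1⟩

lemma ffR_strictMono {γ δ : Ordinal} {f g : FF γ δ}
    (h : ∃ ξ : Ordinal, f.1 ξ < g.1 ξ ∧ ∀ η : Ordinal, ξ < η → f.1 η = g.1 η) :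
    ffR γ δ f < ffR γ δ g := by
  obtain ⟨ξ, hfg, hagree⟩ := h
  have hξδ : ξ < δ := g.2.1 ξ (Finsupp.mem_support_iff.2 (hfg.trans_le' zero_le).ne')
  refine ffval_main f.1 g.1 ξ hfg hagree (clist g.1) (clist f.1) δ
    (clist_sorted f.1) (clist_sorted g.1) (mem_clist_iff f) (mem_clist_iff g) ?_ ?_ hξδ
  · exact fun η hη => f.2.2 η ((mem_clist_iff f η).1 hη).2
  · exact fun η hη => g.2.2 η ((mem_clist_iff g η).1 hη).2

lemma ffR_lt_opow {γ δ : Ordinal} (hγ : 0 < γ) (f : FF γ δ) : ffR γ δ f < γ ^ δ := by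
  refine ffval_lt_opow hγ f.1 (clist f.1) δ (clist_sorted f.1) ?_ ?_
  · exact fun ξ hξ => ((mem_clist_iff f ξ).1 hξ).2
  · exact fun ξ hξ => f.2.2 ξ ((mem_clist_iff f ξ).1 hξ).2

/-- Build a finsupp from an association list of (exponent, coefficient) pairs. -/
def ofCNF (L : List (Ordinal × Ordinal)) : Ordinal →₀ Ordinal :=
  L.foldr (fun p acc => Finsupp.single p.1 p.2 + acc) 0

lemma ofCNF_apply_not_mem : ∀ (L : List (Ordinal × Ordinal)) (ξ : Ordinal),
    ξ ∉ L.map Prod.fst → ofCNF L ξ = 0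
  | [], ξ, _ => rfl
  | q :: L, ξ, h => by
    rw [List.map_cons, List.mem_cons, not_or] at h
    show (Finsupp.single q.1 q.2 + ofCNF L) ξ = 0
    rw [Finsupp.add_apply, Finsupp.single_eq_of_ne' (fun hq => h.1 hq.symm),
      ofCNF_apply_not_mem L ξ h.2, add_zero]

lemma ofCNF_apply_mem : ∀ (L : List (Ordinal × Ordinal)), (L.map Prod.fst).Nodup →
    ∀ p ∈ L, ofCNF L p.1 = p.2
  | q :: L, hnd, p, hp => by
    rw [List.map_cons, List.nodup_cons] at hnd
    show (Finsupp.single q.1 q.2 + ofCNF L) p.1 = p.2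
    rcases List.mem_cons.1 hp with rfl | hp
    · rw [Finsupp.add_apply, Finsupp.single_eq_same,
        ofCNF_apply_not_mem L p.1 hnd.1, add_zero]
    · have hne : q.1 ≠ p.1 := fun h => hnd.1 (h ▸ List.mem_map_of_mem (f := Prod.fst) hp)
      rw [Finsupp.add_apply, Finsupp.single_eq_of_ne' hne, zero_add]
      exact ofCNF_apply_mem L hnd.2 p hp

lemma ofCNF_support {L : List (Ordinal × Ordinal)} (hnd : (L.map Prod.fst).Nodup)
    (h0 : ∀ p ∈ L, p.2 ≠ 0) : (ofCNF L).support = (L.map Prod.fst).toFinset := by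
  ext ξ
  rw [Finsupp.mem_support_iff, List.mem_toFinset]
  constructor
  · intro h
    by_contra hc
    exact h (ofCNF_apply_not_mem L ξ hc)
  · intro h
    obtain ⟨p, hp, rfl⟩ := List.mem_map.1 h
    rw [ofCNF_apply_mem L hnd p hp]
    exact h0 p hp

lemma ffval_ofCNF {γ : Ordinal} : ∀ (L : List (Ordinal × Ordinal)), (L.map Prod.fst).Nodup →
    ffval γ (ofCNF L) (L.map Prod.fst) = L.foldr (fun p r => γ ^ p.1 * p.2 + r) 0
  | [], _ => rfl
  | q :: L, hnd => by
    rw [List.map_cons, List.nodup_cons] at hnd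
    rw [List.map_cons, ffval_cons, List.foldr_cons,
      ofCNF_apply_mem (q :: L) (by rw [List.map_cons, List.nodup_cons]; exact hnd) q
        (List.mem_cons_self)]
    congr 1
    rw [show ffval γ (ofCNF (q :: L)) (L.map Prod.fst) = ffval γ (ofCNF L) (L.map Prod.fst) from
      ffval_congr fun ξ hξ => ?_, ffval_ofCNF L hnd.2]
    obtain ⟨p, hp, rfl⟩ := List.mem_map.1 hξ
    rw [ofCNF_apply_mem (q :: L) (by rw [List.map_cons, List.nodup_cons]; exact hnd) p
      (List.mem_cons_of_mem q hp), ofCNF_apply_mem L hnd.2 p hp]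

/-- Surjectivity onto the initial segment. -/
lemma ffR_exists {γ δ : Ordinal} (f : FF γ δ) {o : Ordinal} (h : o < ffR γ δ f) :
    ∃ g : FF γ δ, ffR γ δ g = o := by
  -- γ must be > 1
  have hsupp : f.1.support.Nonempty := by
    rcases Finset.eq_empty_or_nonempty f.1.support with he | hn
    · exfalso
      have : clist f.1 = [] := by
        have := clist_toFinset f.1
        rw [he] at this
        exact List.toFinset_eq_empty_iff _ |>.1 this
      rw [ffR, this, ffval_nil] at h
      exact absurd h (not_lt_of_ge zero_le)
    · exact hn
  obtain ⟨ζ, hζ⟩ := hsupp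
  have hζδ : ζ < δ := f.2.1 ζ hζ
  have hγ : 1 < γ :=
    lt_of_le_of_lt (Ordinal.one_le_iff_ne_zero.2 (Finsupp.mem_support_iff.1 hζ)) (f.2.2 ζ hζδ)
  have hγ0 : 0 < γ := zero_lt_one.trans hγ
  have ho : o < γ ^ δ := h.trans (ffR_lt_opow hγ0 f)
  -- build from the CNF of o
  set L := Ordinal.CNF γ o with hL
  have hsorted : (L.map Prod.fst).Pairwise (· > ·) := (Ordinal.CNF.sortedGT γ o).pairwise
  have hnd : (L.map Prod.fst).Nodup := hsorted.nodup
  have hcoeff0 : ∀ p ∈ L, p.2 ≠ 0 := fun p hp => (Ordinal.CNF.snd_pos hp).ne'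
  have hkeyδ : ∀ ξ ∈ L.map Prod.fst, ξ < δ := by
    intro ξ hξ
    obtain ⟨p, hp, rfl⟩ := List.mem_map.1 hξ
    have ho0 : o ≠ 0 := by
      rintro rfl
      rw [hL] at hp
      simp [Ordinal.CNF.zero_right] at hp
    exact (Ordinal.CNF.fst_le_log hp).trans_lt ((Ordinal.lt_opow_iff_log_lt hγ ho0).1 ho)
  have hsuppg : (ofCNF L).support = (L.map Prod.fst).toFinset := ofCNF_support hnd hcoeff0
  refine ⟨⟨ofCNF L, ?_, ?_⟩, ?_⟩
  · intro ξ hξ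
    rw [hsuppg, List.mem_toFinset] at hξ
    exact hkeyδ ξ hξ
  · intro ξ _
    by_cases hmem : ξ ∈ L.map Prod.fst
    · obtain ⟨p, hp, rfl⟩ := List.mem_map.1 hmem
      rw [ofCNF_apply_mem L hnd p hp]
      exact Ordinal.CNF.snd_lt hγ hp
    · rw [ofCNF_apply_not_mem L ξ hmem]
      exact hγ0
  · refine (ffR_eq γ δ _ hsorted ?_).trans ?_
    · exact hsuppg.symm
    · show ffval γ (ofCNF L) (L.map Prod.fst) = o
      rw [ffval_ofCNF L hnd, Ordinal.CNF.foldr]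

lemma Flt_strictMono {γ δ : Ordinal} {f g : FF γ δ} (h : Flt γ δ f g) :
    ffR γ δ f < ffR γ δ g :=
  ffR_strictMono h

lemma typein_eq_ffR (γ δ : Ordinal) [IsWellOrder (FF γ δ) (Flt γ δ)] (x : FF γ δ) :
    Ordinal.typein (Flt γ δ) x = Ordinal.lift.{1, 0} (ffR γ δ x) := by
  refine IsWellFounded.induction (Flt γ δ)
    (motive := fun x => Ordinal.typein (Flt γ δ) x = Ordinal.lift.{1, 0} (ffR γ δ x)) x ?_
  intro x IH
  refine le_antisymm ?_ ?_
  · by_contra hc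
    push_neg at hc
    obtain ⟨g, hg⟩ := Ordinal.typein_surj (Flt γ δ) (hc.trans (Ordinal.typein_lt_type _ x))
    have hgx : Flt γ δ g x := (Ordinal.typein_lt_typein (Flt γ δ)).1 (by rw [hg]; exact hc)
    have h1 := IH g hgx
    rw [h1] at hg
    exact absurd (Ordinal.lift_inj.1 hg) (ne_of_lt (Flt_strictMono hgx))
  · by_contra hc
    push_neg at hc
    obtain ⟨o', ho', holift⟩ := Ordinal.lt_lift_iff.1 hc
    obtain ⟨g, hgo⟩ := ffR_exists x ho'
    have hgx : Flt γ δ g x := by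
      rcases trichotomous_of (Flt γ δ) g x with h | h | h
      · exact h
      · exact absurd (h ▸ hgo ▸ ho') (lt_irrefl _)
      · have := Flt_strictMono h
        rw [hgo] at this
        exact absurd (this.trans ho') (lt_irrefl _)
    have h2 : Ordinal.typein (Flt γ δ) g < Ordinal.typein (Flt γ δ) x :=
      (Ordinal.typein_lt_typein _).2 hgx
    rw [IH g hgx, hgo, holift] at h2
    exact absurd h2 (lt_irrefl _)

end Aux

/-- If the support of `f` is `ξ₁ > ξ₂ > ⋯ > ξ_k` (listed strictly decreasing), then the
rank of `f` in the anti-lexicographic well-order equals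
`γ ^ ξ₁ * f ξ₁ + (γ ^ ξ₂ * f ξ₂ + ⋯)` (ordinal arithmetic). -/
theorem stmt_4 (γ δ : Ordinal) [IsWellOrder (FF γ δ) (Flt γ δ)] (f : FF γ δ)
    (l : List Ordinal) (hsort : l.Pairwise (· > ·))
    (hsupp : l.toFinset = f.1.support) :
    Ordinal.typein (Flt γ δ) f =
      Ordinal.lift.{1, 0} ((l.map fun ξ => γ ^ ξ * f.1 ξ).foldr (· + ·) 0) := by
  have : ((l.map fun ξ => γ ^ ξ * f.1 ξ).foldr (· + ·) 0) = ffval γ f.1 l := rfl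
  rw [this, ← ffR_eq γ δ f hsort hsupp, typein_eq_ffR]
end
end

section
/- Let s ∈ 𝔠 be nonempty and let ξ be the least element of dom(s). Then the ordinal |s| has cofinality greater than ω if and only if ξ is a successor ordinal and s(ξ) is a successor ordinal. -/
open Ordinal

noncomputable section

/-- ω₁ as an ordinal. -/
def w1 : Ordinal := (Cardinal.aleph 1).ord

/-- 𝔠: finite partial functions from ω₁ to ω₁ \ {0}, represented as finitely supported
functions `Ordinal →₀ Ordinal` (the extension `s̄` by `0`) whose support consists of
ordinals below ω₁ and whose (nonzero) values are below ω₁. -/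
def Cc := {f : Ordinal →₀ Ordinal // (∀ ξ ∈ f.support, ξ < w1) ∧ (∀ ξ ∈ f.support, f ξ < w1)}

/-- The anti-lexicographic order on 𝔠 : `s < t` iff `s̄ ξ < t̄ ξ` at the greatest `ξ`
where `s̄` and `t̄` differ. -/
def Clt (s t : Cc) : Prop :=
  ∃ ξ : Ordinal, s.1 ξ < t.1 ξ ∧ ∀ η : Ordinal, ξ < η → s.1 η = t.1 η

/-- `max(s)`: the largest ordinal occurring in `dom(s) ∪ ran(s)` (0 if `s = ∅`). -/
def maxC (s : Cc) : Ordinal :=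
  (s.1.support ∪ s.1.support.image fun ξ => s.1 ξ).sup id

/-! ### Auxiliary lemmas -/

lemma zero_lt_w1 : 0 < w1 := by
  have : (ω : Ordinal) < w1 := Cardinal.omega0_lt_ord.2 Cardinal.aleph0_lt_aleph_one
  exact (Ordinal.omega0_pos).trans this

lemma w1_isLimit : Order.IsSuccLimit w1 :=
  Cardinal.isSuccLimit_ord Cardinal.aleph0_lt_aleph_one.le

lemma succ_lt_w1 {a : Ordinal} (h : a < w1) : a + 1 < w1 := by
  have := w1_isLimit.succ_lt h
  rwa [Ordinal.add_one_eq_succ]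

lemma card_le_aleph0_of_lt_w1 {o : Ordinal} (h : o < w1) : o.card ≤ Cardinal.aleph0 := by
  have h1 : o.card < Cardinal.aleph 1 := Cardinal.lt_ord.1 h
  have : Cardinal.aleph 1 = Order.succ Cardinal.aleph0 := by
    rw [← Cardinal.aleph_zero, ← Cardinal.aleph_succ, Ordinal.succ_zero]
  rw [this] at h1
  exact Order.lt_succ_iff.1 h1

lemma Cc.val_lt_w1 (s : Cc) (η : Ordinal) : s.1 η < w1 := by
  by_cases h : η ∈ s.1.support
  · exact s.2.2 η h
  · rw [Finsupp.notMem_support_iff.1 h]; exact zero_lt_w1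

/-- Total update function on `Cc`. -/
def updC (s : Cc) (a b : Ordinal) : Cc :=
  if h : a < w1 ∧ b < w1 then
    ⟨s.1.update a b, by
      constructor
      · intro ξ hξ
        rcases Finset.mem_insert.1 (Finsupp.support_update_subset _ _ hξ) with h1 | h1
        · rw [h1]; exact h.1
        · exact s.2.1 ξ h1
      · intro ξ hξ
        rcases eq_or_ne ξ a with rfl | hne
        · rw [Finsupp.coe_update, Function.update_self]; exact h.2
        · rw [Finsupp.coe_update, Function.update_of_ne hne]
          rcases Finset.mem_insert.1 (Finsupp.support_update_subset _ _ hξ) with h1 | h1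
          · exact absurd h1 hne
          · exact s.2.2 ξ h1⟩
  else s

lemma updC_same (s : Cc) {a b : Ordinal} (ha : a < w1) (hb : b < w1) :
    (updC s a b).1 a = b := by
  simp only [updC, ha, hb, and_self, ↓reduceDIte]
  show (s.1.update a b) a = b
  simp [Finsupp.coe_update]

lemma updC_ne (s : Cc) {a b : Ordinal} (ha : a < w1) (hb : b < w1) {η : Ordinal} (h : η ≠ a) :
    (updC s a b).1 η = s.1 η := by
  simp only [updC, ha, hb, and_self, ↓reduceDIte]
  show (s.1.update a b) η = s.1 η
  simp [Finsupp.coe_update, Function.update_of_ne h]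

universe u_aux v_aux

lemma not_Clt_of_Clt [inst : IsWellOrder Cc.{u_aux, v_aux} Clt] {a b : Cc.{u_aux, v_aux}} (h : Clt a b) : ¬ Clt b a :=
  inst.toIsWellFounded.wf.asymmetric a b h

lemma cof_type_le_rel {α : Type*} {r : α → α → Prop} [H : IsWellOrder α r] {S : Set α}
    (h : Set.Unbounded r S) : Ordinal.cof (Ordinal.type r) ≤ Cardinal.mk S := by
  classical
  let := linearOrderOfSTO r
  have : WellFoundedLT α := H.toIsWellFounded
  have e : Ordinal.cof (Ordinal.type r) = Order.cof α := Ordinal.cof_type α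
  rw [e]
  apply Order.cof_le
  intro x
  obtain ⟨y, hy, hny⟩ := h x
  exact ⟨y, hy, (not_lt (a := y) (b := x)).1 hny⟩

lemma cof_eq_rel {α : Type*} (r : α → α → Prop) [H : IsWellOrder α r] :
    ∃ S : Set α, Set.Unbounded r S ∧ Cardinal.mk S = Ordinal.cof (Ordinal.type r) := by
  classical
  let := linearOrderOfSTO r
  have : WellFoundedLT α := H.toIsWellFounded
  have e : Ordinal.cof (Ordinal.type r) = Order.cof α := Ordinal.cof_type α
  obtain ⟨S, hS, hS'⟩ := Order.exists_cof_eq α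
  refine ⟨S, fun x => ?_, hS'.trans e.symm⟩
  obtain ⟨y, hy, hxy⟩ := hS x
  exact ⟨y, hy, (not_lt (a := y) (b := x)).2 hxy⟩

/-- Bounding the cofinality of the rank from above by a countable unbounded family. -/
lemma cof_le_of_unbounded [inst : IsWellOrder Cc.{u_aux, v_aux} Clt] (s : Cc.{u_aux, v_aux}) (T : Set Cc.{u_aux, v_aux})
    (hT : Cardinal.mk T ≤ Cardinal.aleph0) (hTs : ∀ t ∈ T, Clt t s)
    (hub : ∀ a : Cc, Clt a s → ∃ t ∈ T, ¬ Clt t a) :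
    (Ordinal.typein Clt s).cof ≤ Cardinal.aleph0 := by
  have htype : Ordinal.typein Clt s = Ordinal.type (Subrel Clt (Clt · s)) := rfl
  set S : Set {b : Cc // Clt b s} := {x | x.1 ∈ T} with hS
  have hub' : Set.Unbounded (Subrel Clt (Clt · s)) S := by
    intro a
    obtain ⟨t, htT, hnt⟩ := hub a.1 a.2
    exact ⟨⟨t, hTs t htT⟩, htT, hnt⟩
  have h1 : (Ordinal.typein Clt s).cof ≤ Cardinal.mk S := by
    rw [htype]
    exact cof_type_le_rel hub'
  refine h1.trans (le_trans ?_ hT)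
  exact Cardinal.mk_le_of_injective (f := fun x : S => (⟨x.1.1, x.2⟩ : T))
    (by intro x y hxy
        have h2 : (x.1.1 : Cc) = y.1.1 := by simpa using congrArg Subtype.val hxy
        exact Subtype.ext (Subtype.ext h2))

lemma one_lt_w1 : 1 < w1 := by
  have := succ_lt_w1 zero_lt_w1
  rwa [zero_add] at this

lemma ord_lt_add_one (a : Ordinal) : a < a + 1 := by
  rw [Ordinal.add_one_eq_succ]; exact Order.lt_succ a

lemma ord_le_of_lt_add_one {a b : Ordinal} (h : a < b + 1) : a ≤ b := by
  rw [Ordinal.add_one_eq_succ] at h; exact Order.lt_succ_iff.1 h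

lemma ord_add_one_le_of_lt {a b : Ordinal} (h : a < b) : a + 1 ≤ b := by
  rw [Ordinal.add_one_eq_succ]; exact Order.succ_le_of_lt h

lemma mk_Iio_le_aleph0 {o : Ordinal} (ho : o < w1) :
    Cardinal.mk (Set.Iio o) ≤ Cardinal.aleph0 := by
  rw [Ordinal.mk_Iio_ordinal]
  exact Cardinal.lift_le_aleph0.2 (card_le_aleph0_of_lt_w1 ho)

/-- For nonempty `s` in 𝔠 with `ξ` least in the domain of `s`: the rank of `s` has
cofinality greater than ω iff `ξ` is a successor ordinal and `s ξ` is a successor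
ordinal. -/
theorem stmt_5 [IsWellOrder Cc Clt] (s : Cc) (hs : s.1.support.Nonempty) :
    Cardinal.aleph0 < (Ordinal.typein Clt s).cof ↔
      ((∃ β : Ordinal, s.1.support.min' hs = β + 1) ∧
       (∃ β : Ordinal, s.1 (s.1.support.min' hs) = β + 1)) := by
  set ξ := s.1.support.min' hs with hξdef
  have hξmem : ξ ∈ s.1.support := Finset.min'_mem _ hs
  have hξw1 : ξ < w1 := s.2.1 ξ hξmem
  have hsξ0 : s.1 ξ ≠ 0 := Finsupp.mem_support_iff.1 hξmem
  have hbelow : ∀ η, η < ξ → s.1 η = 0 := by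
    intro η hη
    refine Finsupp.notMem_support_iff.1 fun hmem => ?_
    exact absurd (Finset.min'_le _ _ hmem) (not_le.2 hη)
  have hpred : ∀ a : Cc, Clt a s →
      ∃ η, ξ ≤ η ∧ a.1 η < s.1 η ∧ ∀ ζ, η < ζ → a.1 ζ = s.1 ζ := by
    rintro a ⟨η, h1, h2⟩
    refine ⟨η, ?_, h1, h2⟩
    by_contra hlt
    push_neg at hlt
    rw [hbelow η hlt] at h1
    exact absurd h1 (not_lt_of_ge zero_le)
  constructor
  · intro hcof
    by_contra hAB
    have hle : (Ordinal.typein Clt s).cof ≤ Cardinal.aleph0 := by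
      rcases Ordinal.zero_or_succ_or_isSuccLimit (s.1 ξ) with h0 | ⟨γ, hγ⟩ | hlim
      · exact absurd h0 hsξ0
      · -- `s ξ` is a successor; then `ξ` is not a successor
        rw [← Ordinal.add_one_eq_succ, eq_comm] at hγ
        have hA : ∀ β : Ordinal, ξ ≠ β + 1 := fun β hβ => hAB ⟨⟨β, hβ⟩, ⟨γ, hγ⟩⟩
        have hγw1 : γ < w1 :=
          lt_trans (by rw [hγ]; exact ord_lt_add_one γ) (Cc.val_lt_w1 s ξ)
        rcases Ordinal.zero_or_succ_or_isSuccLimit ξ with hξ0 | ⟨β, hβ⟩ | hξlim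
        · -- `ξ = 0` : the predecessors of `s` have a maximum
          set t : Cc := updC s ξ γ with htdef
          have htξ : t.1 ξ = γ := updC_same s hξw1 hγw1
          have htother : ∀ η, η ≠ ξ → t.1 η = s.1 η := fun η h => updC_ne s hξw1 hγw1 h
          have ht : Clt t s := ⟨ξ, by rw [htξ, hγ]; exact ord_lt_add_one γ,
            fun η hη => htother η (ne_of_lt hη).symm⟩
          refine cof_le_of_unbounded s {t}
            (by rw [Cardinal.mk_singleton]; exact Cardinal.one_le_aleph0)
            (fun x hx => by rw [Set.eq_of_mem_singleton hx]; exact ht) ?_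
          intro a ha
          refine ⟨t, Set.mem_singleton t, ?_⟩
          obtain ⟨η, hηξ, hlt, hagr⟩ := hpred a ha
          rcases eq_or_lt_of_le hηξ with heq | hltξ
          · rw [← heq] at hlt hagr
            rw [hγ] at hlt
            rcases lt_or_eq_of_le (ord_le_of_lt_add_one hlt) with hlt2 | heq2
            · exact not_Clt_of_Clt ⟨ξ, by rw [htξ]; exact hlt2,
                fun ζ hζ => by rw [htother ζ (ne_of_lt hζ).symm]; exact hagr ζ hζ⟩
            · have hat : a = t := by
                apply Subtype.ext
                ext ζ
                rcases eq_or_ne ζ ξ with rfl | hne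
                · rw [heq2, htξ]
                · have hζξ : ξ < ζ := by
                    rw [hξ0] at hne ⊢
                    exact pos_iff_ne_zero.2 hne
                  rw [hagr ζ hζξ, ← htother ζ hne]
              rw [hat]
              intro hcon
              exact not_Clt_of_Clt hcon hcon
          · exact not_Clt_of_Clt ⟨η, by rw [htother η (ne_of_lt hltξ).symm]; exact hlt,
              fun ζ hζ => by rw [htother ζ (ne_of_lt (hltξ.trans hζ)).symm]; exact hagr ζ hζ⟩
        · exact absurd (by rw [← hβ, Ordinal.add_one_eq_succ] : ξ = β + 1) (hA β)
        · -- `ξ` is a limit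
          have hξpos : 0 < ξ := hξlim.pos
          set T : Set Cc := (fun ζ => updC (updC s ξ γ) ζ 1) '' Set.Iio ξ with hTdef
          have h1w1 : (1 : Ordinal) < w1 := one_lt_w1
          have hval : ∀ ζ, ζ < ξ →
              ((updC (updC s ξ γ) ζ 1).1 ζ = 1 ∧ (updC (updC s ξ γ) ζ 1).1 ξ = γ) ∧
              ∀ η, η ≠ ζ → η ≠ ξ → (updC (updC s ξ γ) ζ 1).1 η = s.1 η := by
            intro ζ hζ
            have hζw1 : ζ < w1 := hζ.trans hξw1
            refine ⟨⟨updC_same _ hζw1 h1w1, ?_⟩, ?_⟩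
            · rw [updC_ne _ hζw1 h1w1 (ne_of_lt hζ).symm]
              exact updC_same s hξw1 hγw1
            · intro η h1 h2
              rw [updC_ne _ hζw1 h1w1 h1, updC_ne s hξw1 hγw1 h2]
          have hTs : ∀ x ∈ T, Clt x s := by
            rintro x ⟨ζ, hζ, rfl⟩
            obtain ⟨⟨-, hxξ⟩, hother⟩ := hval ζ hζ
            exact ⟨ξ, by rw [hxξ, hγ]; exact ord_lt_add_one γ,
              fun η hη => hother η (ne_of_lt (hζ.trans hη)).symm (ne_of_lt hη).symm⟩
          refine cof_le_of_unbounded s T (((Cardinal.le_aleph0_iff_set_countable.1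
            (mk_Iio_le_aleph0 hξw1)).image _).le_aleph0) hTs ?_
          intro a ha
          obtain ⟨η, hηξ, hlt, hagr⟩ := hpred a ha
          rcases eq_or_lt_of_le hηξ with heq | hltξ
          · rw [← heq] at hlt hagr
            rw [hγ] at hlt
            rcases lt_or_eq_of_le (ord_le_of_lt_add_one hlt) with hlt2 | heq2
            · refine ⟨_, ⟨0, hξpos, rfl⟩, ?_⟩
              obtain ⟨⟨-, hxξ⟩, hother⟩ := hval 0 hξpos
              exact not_Clt_of_Clt ⟨ξ, by rw [hxξ]; exact hlt2,
                fun ζ hζ => by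
                  rw [hother ζ (ne_of_lt (hξpos.trans hζ)).symm (ne_of_lt hζ).symm]
                  exact hagr ζ hζ⟩
            · -- `a ξ = γ` : jump above the support of `a` below `ξ`
              set F := a.1.support.filter (· < ξ) with hFdef
              set ζ0 := F.sup id with hζ0def
              have hζ0 : ζ0 < ξ := by
                refine Finset.sup_lt_iff (by rw [Ordinal.bot_eq_zero]; exact hξpos) |>.2 ?_
                intro b hb
                exact (Finset.mem_filter.1 hb).2
              have hζξ : ζ0 + 1 < ξ := by
                rw [Ordinal.add_one_eq_succ]; exact hξlim.succ_lt hζ0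
              have hav : ∀ ρ, ζ0 < ρ → ρ < ξ → a.1 ρ = 0 := by
                intro ρ h1 h2
                refine Finsupp.notMem_support_iff.1 fun hmem => ?_
                have : ρ ∈ F := Finset.mem_filter.2 ⟨hmem, h2⟩
                exact absurd (Finset.le_sup (f := id) this) (not_le.2 h1)
              refine ⟨_, ⟨ζ0 + 1, hζξ, rfl⟩, ?_⟩
              obtain ⟨⟨hxζ, hxξ⟩, hother⟩ := hval (ζ0 + 1) hζξ
              refine not_Clt_of_Clt ⟨ζ0 + 1, ?_, ?_⟩
              · rw [hxζ, hav (ζ0 + 1) (ord_lt_add_one ζ0) hζξ]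
                exact zero_lt_one
              · intro ρ hρ
                rcases lt_trichotomy ρ ξ with h1 | rfl | h1
                · rw [hav ρ ((ord_lt_add_one ζ0).trans hρ) h1,
                    hother ρ (ne_of_lt hρ).symm (ne_of_lt h1), hbelow ρ h1]
                · rw [heq2, hxξ]
                · rw [hother ρ (ne_of_lt (hζξ.trans h1)).symm (ne_of_lt h1).symm]
                  exact hagr ρ h1
          · refine ⟨_, ⟨0, hξpos, rfl⟩, ?_⟩
            obtain ⟨⟨-, -⟩, hother⟩ := hval 0 hξpos
            exact not_Clt_of_Clt ⟨η,
              by rw [hother η (ne_of_lt (hξpos.trans hltξ)).symm (ne_of_lt hltξ).symm]; exact hlt,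
              fun ζ hζ => by
                rw [hother ζ (ne_of_lt (hξpos.trans (hltξ.trans hζ))).symm
                  (ne_of_lt (hltξ.trans hζ)).symm]
                exact hagr ζ hζ⟩
      · -- `s ξ` is a limit
        have hsξpos : 0 < s.1 ξ := hlim.pos
        set T : Set Cc := (fun c => updC s ξ c) '' Set.Iio (s.1 ξ) with hTdef
        have hval : ∀ c, c < s.1 ξ →
            (updC s ξ c).1 ξ = c ∧ ∀ η, η ≠ ξ → (updC s ξ c).1 η = s.1 η := by
          intro c hc
          have hcw1 : c < w1 := hc.trans (Cc.val_lt_w1 s ξ)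
          exact ⟨updC_same s hξw1 hcw1, fun η h => updC_ne s hξw1 hcw1 h⟩
        have hTs : ∀ x ∈ T, Clt x s := by
          rintro x ⟨c, hc, rfl⟩
          obtain ⟨hxξ, hother⟩ := hval c hc
          exact ⟨ξ, by rw [hxξ]; exact hc, fun η hη => hother η (ne_of_lt hη).symm⟩
        refine cof_le_of_unbounded s T (((Cardinal.le_aleph0_iff_set_countable.1
          (mk_Iio_le_aleph0 (Cc.val_lt_w1 s ξ))).image _).le_aleph0) hTs ?_
        intro a ha
        obtain ⟨η, hηξ, hlt, hagr⟩ := hpred a ha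
        rcases eq_or_lt_of_le hηξ with heq | hltξ
        · rw [← heq] at hlt hagr
          have hc : a.1 ξ + 1 < s.1 ξ := by
            rw [Ordinal.add_one_eq_succ]; exact hlim.succ_lt hlt
          refine ⟨_, ⟨a.1 ξ + 1, hc, rfl⟩, ?_⟩
          obtain ⟨hxξ, hother⟩ := hval (a.1 ξ + 1) hc
          exact not_Clt_of_Clt ⟨ξ, by rw [hxξ]; exact ord_lt_add_one _,
            fun ζ hζ => by rw [hother ζ (ne_of_lt hζ).symm]; exact hagr ζ hζ⟩
        · refine ⟨_, ⟨0, hsξpos, rfl⟩, ?_⟩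
          obtain ⟨-, hother⟩ := hval 0 hsξpos
          exact not_Clt_of_Clt ⟨η, by rw [hother η (ne_of_lt hltξ).symm]; exact hlt,
            fun ζ hζ => by rw [hother ζ (ne_of_lt (hltξ.trans hζ)).symm]; exact hagr ζ hζ⟩
    exact absurd hcof (not_lt.2 hle)
  · rintro ⟨⟨β, hβ⟩, ⟨γ, hγ⟩⟩
    by_contra hc
    push_neg at hc
    -- countable unbounded family in the predecessors of `s`
    obtain ⟨S, hSub, hScard⟩ := cof_eq_rel (Subrel Clt (Clt · s))
    have hcard' : Cardinal.mk S ≤ Cardinal.aleph0 := by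
      have : Cardinal.mk S = (Ordinal.typein Clt s).cof := hScard
      rw [this]; exact hc
    -- the zero function is a predecessor of `s`
    have hzero : ∃ z : Cc, Clt z s := by
      refine ⟨⟨0, by simp, by simp⟩, s.1.support.max' hs, ?_, ?_⟩
      · have hmem := Finset.max'_mem s.1.support hs
        have := Finsupp.mem_support_iff.1 hmem
        exact pos_iff_ne_zero.2 this
      · intro η hη
        have : η ∉ s.1.support := fun hmem => absurd (Finset.le_max' _ _ hmem) (not_le.2 hη)
        simp [Finsupp.notMem_support_iff.1 this]
    obtain ⟨z, hz⟩ := hzero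
    have hSne : S.Nonempty := by
      obtain ⟨b, hbS, -⟩ := hSub ⟨z, hz⟩
      exact ⟨b, hbS⟩
    haveI : Countable ↥S := Cardinal.mk_le_aleph0_iff.1 hcard'
    haveI : Nonempty ↥S := hSne.to_subtype
    obtain ⟨g, hg⟩ := exists_surjective_nat ↥S
    -- the bound for values at `β`
    set δ : Ordinal := ⨆ n, (g n).1.1.1 β + 1 with hδdef
    have hδw1 : δ < w1 := by
      refine Cardinal.iSup_lt_ord_lift_of_isRegular Cardinal.isRegular_aleph_one ?_ ?_
      · rw [Cardinal.mk_nat, Cardinal.lift_aleph0]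
        exact Cardinal.aleph0_lt_aleph_one
      · exact fun n => succ_lt_w1 (Cc.val_lt_w1 _ β)
    have hδpos : 0 < δ := by
      have := le_ciSup (f := fun n => (g n).1.1.1 β + 1) Ordinal.bddAbove_of_small 0
      exact lt_of_lt_of_le (lt_of_le_of_lt zero_le (ord_lt_add_one _)) this
    have hδgt : ∀ x : ↥S, x.1.1.1 β < δ := by
      intro x
      obtain ⟨n, rfl⟩ := hg x
      exact lt_of_lt_of_le (ord_lt_add_one _) (le_ciSup Ordinal.bddAbove_of_small n)
    have hβξ : β < ξ := by rw [hβ]; exact ord_lt_add_one β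
    have hβw1 : β < w1 := hβξ.trans hξw1
    have hγw1 : γ < w1 := by
      have : γ < s.1 ξ := by rw [hγ]; exact ord_lt_add_one γ
      exact this.trans (Cc.val_lt_w1 s ξ)
    -- the bound
    set t : Cc := updC (updC s ξ γ) β δ with htdef
    have htβ : t.1 β = δ := updC_same _ hβw1 hδw1
    have htξ : t.1 ξ = γ := by
      rw [htdef, updC_ne _ hβw1 hδw1 (ne_of_lt hβξ).symm]
      exact updC_same s hξw1 hγw1
    have htother : ∀ η, η ≠ β → η ≠ ξ → t.1 η = s.1 η := by
      intro η h1 h2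
      rw [htdef, updC_ne _ hβw1 hδw1 h1, updC_ne s hξw1 hγw1 h2]
    have ht : Clt t s := by
      refine ⟨ξ, ?_, ?_⟩
      · rw [htξ, hγ]; exact ord_lt_add_one γ
      · intro η hη
        exact htother η (ne_of_gt (hβξ.trans hη)) (ne_of_gt hη)
    -- every element of `S` is below `t`
    have key : ∀ x : ↥S, Clt x.1.1 t := by
      intro x
      obtain ⟨η, hηξ, hlt, hagr⟩ := hpred x.1.1 x.1.2
      rcases eq_or_lt_of_le hηξ with heq | hltξ
      · -- η = ξ
        rw [← heq] at hlt hagr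
        have hle : x.1.1.1 ξ ≤ γ := by
          rw [hγ] at hlt; exact ord_le_of_lt_add_one hlt
        rcases lt_or_eq_of_le hle with hlt2 | heq2
        · refine ⟨ξ, ?_, ?_⟩
          · rw [htξ]; exact hlt2
          · intro ζ hζ
            rw [htother ζ (ne_of_gt (hβξ.trans hζ)) (ne_of_gt hζ)]
            exact hagr ζ hζ
        · refine ⟨β, ?_, ?_⟩
          · rw [htβ]; exact hδgt x
          · intro ζ hζ
            rcases eq_or_ne ζ ξ with rfl | hne
            · rw [htξ, heq2]
            · have hζξ : ξ < ζ := by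
                have : ξ ≤ ζ := by rw [hβ]; exact ord_add_one_le_of_lt hζ
                exact lt_of_le_of_ne this (Ne.symm hne)
              rw [htother ζ (ne_of_gt (hβξ.trans hζξ)) hne]
              exact hagr ζ hζξ
      · -- ξ < η
        refine ⟨η, ?_, ?_⟩
        · rw [htother η (ne_of_gt (hβξ.trans hltξ)) (ne_of_gt hltξ)]
          exact hlt
        · intro ζ hζ
          rw [htother ζ (ne_of_gt (hβξ.trans (hltξ.trans hζ))) (ne_of_gt (hltξ.trans hζ))]
          exact hagr ζ hζ
    obtain ⟨x, hxS, hnx⟩ := hSub ⟨t, ht⟩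
    exact hnx (key ⟨x, hxS⟩)
end
end

section
/- Let α < ω₁^{ω₁} and let ξ < max(code(α)). Then there is an ordinal α₀ < α such that for every α′ with α₀ ≤ α′ < α, we have ξ ≤ max(code(α′)). -/
open Ordinal

noncomputable section

lemma maxC_ge_support {t : Cc} {η : Ordinal} (h : η ∈ t.1.support) : η ≤ maxC t :=
  Finset.le_sup (f := id) (Finset.mem_union_left _ h)

lemma maxC_ge_value {t : Cc} {η : Ordinal} (h : η ∈ t.1.support) : t.1 η ≤ maxC t :=
  Finset.le_sup (f := id) (Finset.mem_union_right _ (Finset.mem_image_of_mem _ h))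

/-- Key sandwich lemma: if `t₀` agrees with `s` strictly above `μ` and `t₀ ≤ t < s`
in the anti-lexicographic order, then `t` also agrees with `s` strictly above `μ`,
and moreover `t₀ μ ≤ t μ`. -/
lemma agree_above {t t₀ s : Cc} {μ : Ordinal}
    (h : ∀ η, μ < η → t₀.1 η = s.1 η) (h1 : ¬ Clt t t₀) (h2 : Clt t s) :
    (∀ η, μ < η → t.1 η = s.1 η) ∧ t₀.1 μ ≤ t.1 μ := by
  obtain ⟨ζ, hζ, hab⟩ := h2
  have key : ∀ η, μ < η → t.1 η = s.1 η := by
    intro η hη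
    rcases le_or_gt ζ μ with hle | hlt
    · exact hab η (hle.trans_lt hη)
    · exact absurd ⟨ζ, hζ.trans_eq (h ζ hlt).symm,
        fun η h' => (hab η h').trans (h η (hlt.trans h')).symm⟩ h1
  refine ⟨key, ?_⟩
  by_contra hc
  push_neg at hc
  exact h1 ⟨μ, hc, fun η h' => (key η h').trans (h η h').symm⟩

/-- If α < ω₁ ^ ω₁ and ξ is below the max of the code of α, then there is α₀ < α such
that for every α' with α₀ ≤ α' < α, ξ is at most the max of the code of α'. (The code
of α is expressed as the element of 𝔠 of rank α.) -/
theorem stmt_7 [IsWellOrder Cc Clt] (α : Ordinal) (hα : α < w1 ^ w1)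
    (s : Cc) (hs : Ordinal.typein Clt s = Ordinal.lift.{1, 0} α)
    (ξ : Ordinal) (hξ : ξ < maxC s) :
    ∃ α₀ : Ordinal, α₀ < α ∧ ∀ α' : Ordinal, α₀ ≤ α' → α' < α →
      ∀ s' : Cc, Ordinal.typein Clt s' = Ordinal.lift.{1, 0} α' → ξ ≤ maxC s' := by
  -- get a witness b ∈ dom(s) ∪ ran(s) with ξ < b
  have hξ' : ξ < (s.1.support ∪ s.1.support.image fun ζ => s.1 ζ).sup id := hξ
  obtain ⟨b, hb, hξb⟩ := Finset.lt_sup_iff.1 hξ'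
  have hsupp : s.1.support.Nonempty := by
    rcases Finset.mem_union.1 hb with h | h
    · exact ⟨b, h⟩
    · obtain ⟨η, hη, _⟩ := Finset.mem_image.1 h
      exact ⟨η, hη⟩
  set lam := s.1.support.max' hsupp with hlam
  have hlam_mem : lam ∈ s.1.support := s.1.support.max'_mem hsupp
  have hs_above : ∀ η, lam < η → s.1 η = 0 := by
    intro η hη
    by_contra h0
    exact absurd (s.1.support.le_max' η (Finsupp.mem_support_iff.2 h0)) (not_le.2 hη)
  -- trivial case ξ = 0
  rcases eq_or_ne ξ 0 with rfl | hξ0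
  · refine ⟨0, ?_, fun α' _ _ s' _ => zero_le⟩
    -- α > 0: the empty code is strictly below s
    have hz : Clt ⟨0, fun x hx => by simp at hx, fun x hx => by simp at hx⟩ s := by
      refine ⟨lam, ?_, fun η hη => ?_⟩
      · exact pos_iff_ne_zero.2 (Finsupp.mem_support_iff.1 hlam_mem)
      · simp [hs_above η hη]
    have := (Ordinal.typein_lt_typein Clt).2 hz
    rw [hs] at this
    have h' : (0 : Ordinal.{1}) < Ordinal.lift.{1,0} α := lt_of_le_of_lt (zero_le) this
    refine pos_iff_ne_zero.2 fun h => ?_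
    rw [h, Ordinal.lift_zero] at h'
    exact lt_irrefl _ h'
  -- main case: ξ ≠ 0
  rcases Finset.mem_union.1 hb with hbdom | hbran
  · -- Case A: ξ < b ∈ dom(s).  Use u = single ξ 1 as lower bound.
    have hξlam : ξ < lam := lt_of_lt_of_le hξb (s.1.support.le_max' b hbdom)
    have hξw1 : ξ < w1 := lt_trans hξb (s.2.1 b hbdom)
    have h1w1 : (1 : Ordinal) < w1 := by
      calc (1 : Ordinal) < Ordinal.omega0 := Ordinal.one_lt_omega0
        _ = Cardinal.aleph0.ord := Cardinal.ord_aleph0.symm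
        _ < w1 := Cardinal.ord_lt_ord.2 Cardinal.aleph0_lt_aleph_one
    set u : Cc := ⟨Finsupp.single ξ 1, by
      constructor <;> intro x hx <;>
        rcases Finsupp.mem_support_iff.1 hx with h <;>
        rcases eq_or_ne ξ x with rfl | hne
      · exact hξw1
      · exact absurd (Finsupp.single_eq_of_ne' hne) h
      · simpa using h1w1
      · exact absurd (Finsupp.single_eq_of_ne' hne) h⟩ with hu
    have hus : Clt u s := by
      refine ⟨lam, ?_, fun η hη => ?_⟩
      · have : u.1 lam = 0 := Finsupp.single_eq_of_ne' (ne_of_lt hξlam)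
        rw [this]
        exact pos_iff_ne_zero.2 (Finsupp.mem_support_iff.1 hlam_mem)
      · have : u.1 η = 0 := Finsupp.single_eq_of_ne' (ne_of_lt (hξlam.trans hη))
        rw [this, hs_above η hη]
    have htu : Ordinal.typein Clt u < Ordinal.lift.{1,0} α := by
      rw [← hs]; exact (Ordinal.typein_lt_typein Clt).2 hus
    obtain ⟨α₀, hα₀⟩ := Ordinal.mem_range_lift_of_le htu.le
    refine ⟨α₀, by rwa [← Ordinal.lift_lt, hα₀], fun α' h₀ h₁ s' hs' => ?_⟩
    have hns'u : ¬ Clt s' u := by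
      rw [← Ordinal.typein_lt_typein Clt]
      rw [hs', ← hα₀]
      exact not_lt.2 (Ordinal.lift_le.2 h₀)
    by_contra hcon
    push_neg at hcon
    apply hns'u
    have hz : ∀ η, ξ ≤ η → s'.1 η = 0 := by
      intro η hη
      by_contra h0
      exact absurd (le_trans hη (maxC_ge_support (Finsupp.mem_support_iff.2 h0)))
        (not_le.2 hcon)
    refine ⟨ξ, ?_, fun η hη => ?_⟩
    · rw [hz ξ le_rfl]
      have : u.1 ξ = 1 := Finsupp.single_eq_same
      rw [this]; exact zero_lt_one
    · rw [hz η hη.le, Finsupp.single_eq_of_ne' (ne_of_lt hη)]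
  · -- Case B: ξ < b = s η for some η ∈ dom(s).  Use t₀ = update s η ξ.
    obtain ⟨η, hηmem, hηval⟩ := Finset.mem_image.1 hbran
    have hξval : ξ < s.1 η := hηval ▸ hξb
    set t₀ : Cc := ⟨Finsupp.update s.1 η ξ, by
      have hsup : (Finsupp.update s.1 η ξ).support = insert η s.1.support :=
        Finsupp.support_update_ne_zero s.1 η hξ0
      constructor <;> intro x hx <;> rw [hsup] at hx <;>
        rcases Finset.mem_insert.1 hx with rfl | hx'
      · exact s.2.1 x hηmem
      · exact s.2.1 x hx'
      · rw [Finsupp.coe_update, Function.update_self]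
        exact hξval.trans (s.2.2 x hηmem)
      · rcases eq_or_ne x η with rfl | hne
        · rw [Finsupp.coe_update, Function.update_self]
          exact hξval.trans (s.2.2 x hηmem)
        · rw [Finsupp.coe_update, Function.update_of_ne hne]
          exact s.2.2 x hx'⟩ with ht₀
    have ht₀η : t₀.1 η = ξ := by rw [ht₀]; simp [Finsupp.coe_update]
    have ht₀_above : ∀ ζ, η < ζ → t₀.1 ζ = s.1 ζ := by
      intro ζ hζ
      rw [ht₀]
      simp [Finsupp.coe_update, Function.update_of_ne (ne_of_gt hζ)]
    have ht₀s : Clt t₀ s := ⟨η, by rw [ht₀η]; exact hξval, ht₀_above⟩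
    have htu : Ordinal.typein Clt t₀ < Ordinal.lift.{1,0} α := by
      rw [← hs]; exact (Ordinal.typein_lt_typein Clt).2 ht₀s
    obtain ⟨α₀, hα₀⟩ := Ordinal.mem_range_lift_of_le htu.le
    refine ⟨α₀, by rwa [← Ordinal.lift_lt, hα₀], fun α' h₀ h₁ s' hs' => ?_⟩
    have hns't₀ : ¬ Clt s' t₀ := by
      rw [← Ordinal.typein_lt_typein Clt]
      rw [hs', ← hα₀]
      exact not_lt.2 (Ordinal.lift_le.2 h₀)
    have hs's : Clt s' s := by
      rw [← Ordinal.typein_lt_typein Clt]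
      rw [hs', hs]
      exact Ordinal.lift_lt.2 h₁
    obtain ⟨-, hle⟩ := agree_above ht₀_above hns't₀ hs's
    rw [ht₀η] at hle
    have hmem : η ∈ s'.1.support := by
      apply Finsupp.mem_support_iff.2
      intro h0
      rw [h0] at hle
      exact hξ0 (nonpos_iff_eq_zero.1 hle)
    exact le_trans hle (maxC_ge_value hmem)

end
end

section
/- Let s ∈ 𝔠, let ξ be the least element of dom(s), and suppose s(ξ) is a limit ordinal. For each η with 0 < η < s(ξ), let s_η be the function obtained from s by replacing the value at ξ with η. Then {|s_η| : 0 < η < s(ξ)} is cofinal in |s|. -/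
open Ordinal

noncomputable section

/-- Constructing the element of 𝔠 obtained by updating `s` at the minimum of its
support with a value `0 < η < s ξ₀`. -/
def updCc (s : Cc) (hs : s.1.support.Nonempty) (η : Ordinal) (hη : 0 < η)
    (hηlt : η < s.1 (s.1.support.min' hs)) : Cc := by
  refine ⟨Finsupp.update s.1 (s.1.support.min' hs) η, ?_, ?_⟩
  · intro ξ hξ
    rw [Finsupp.support_update_ne_zero _ _ hη.ne'] at hξ
    rw [Finset.insert_eq_self.2 (s.1.support.min'_mem hs)] at hξ
    exact s.2.1 _ hξ
  · intro ξ hξ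
    rw [Finsupp.support_update_ne_zero _ _ hη.ne'] at hξ
    rw [Finset.insert_eq_self.2 (s.1.support.min'_mem hs)] at hξ
    rw [Finsupp.coe_update, Function.update_apply]
    split
    · exact hηlt.trans (s.2.2 _ (s.1.support.min'_mem hs))
    · exact s.2.2 _ hξ

theorem updCc_spec (s : Cc) (hs : s.1.support.Nonempty) (η : Ordinal) (hη : 0 < η)
    (hηlt : η < s.1 (s.1.support.min' hs)) :
    (updCc s hs η hη hηlt).1 = Finsupp.update s.1 (s.1.support.min' hs) η := rfl

/-- Let `s` be in 𝔠, `ξ` least in the domain of `s`, with `s ξ` a limit ordinal. For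
`0 < η < s ξ` let `t` be `s` with the value at `ξ` replaced by `η`. Then the set of
ranks of all such `t` is cofinal in the rank of `s`. -/
theorem stmt_10 [IsWellOrder Cc Clt] (s : Cc) (hs : s.1.support.Nonempty)
    (hlim : Order.IsSuccLimit (s.1 (s.1.support.min' hs))) :
    (∀ η : Ordinal, 0 < η → η < s.1 (s.1.support.min' hs) →
      ∀ t : Cc, t.1 = Finsupp.update s.1 (s.1.support.min' hs) η →
        Ordinal.typein Clt t < Ordinal.typein Clt s) ∧
    (∀ β, β < Ordinal.typein Clt s →
      ∃ η : Ordinal, 0 < η ∧ η < s.1 (s.1.support.min' hs) ∧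
        ∃ t : Cc, t.1 = Finsupp.update s.1 (s.1.support.min' hs) η ∧
          β ≤ Ordinal.typein Clt t) := by
  set ξ₀ := s.1.support.min' hs with hξ₀
  have happly : ∀ (η ξ : Ordinal), (Finsupp.update s.1 ξ₀ η : Ordinal →₀ Ordinal) ξ =
      if ξ = ξ₀ then η else s.1 ξ := by
    intro η ξ
    rw [Finsupp.coe_update, Function.update_apply]
  constructor
  · intro η hη hηlt t ht
    rw [Ordinal.typein_lt_typein]
    refine ⟨ξ₀, ?_, ?_⟩
    · rw [ht, happly, if_pos rfl]; exact hηlt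
    · intro ζ hζ
      rw [ht, happly, if_neg hζ.ne']
  · intro β hβ
    obtain ⟨u, hu⟩ := Ordinal.typein_surj Clt (hβ.trans (Ordinal.typein_lt_type Clt s))
    rw [← hu, Ordinal.typein_lt_typein] at hβ
    obtain ⟨ξ, hξlt, hξeq⟩ := hβ
    have hξmem : ξ ∈ s.1.support :=
      Finsupp.mem_support_iff.2 (fun h => (zero_le (a := u.1 ξ)).not_gt (h ▸ hξlt))
    have hξ₀le : ξ₀ ≤ ξ := s.1.support.min'_le _ hξmem
    rcases eq_or_lt_of_le hξ₀le with heq | hlt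
    · -- ξ = ξ₀ : take η = u ξ₀ + 1
      subst heq
      refine ⟨Order.succ (u.1 ξ₀), Ordinal.succ_pos _, hlim.succ_lt hξlt,
        updCc s hs _ (Ordinal.succ_pos _) (hlim.succ_lt hξlt), rfl, ?_⟩
      rw [← hu]
      refine le_of_lt ?_
      rw [Ordinal.typein_lt_typein]
      refine ⟨ξ₀, ?_, ?_⟩
      · rw [updCc_spec, happly, if_pos rfl]; exact Order.lt_succ _
      · intro ζ hζ
        rw [updCc_spec, happly, if_neg hζ.ne', ← hξeq ζ hζ]
    · -- ξ₀ < ξ : take η = 1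
      have h1 : (1 : Ordinal) < s.1 ξ₀ := Ordinal.one_lt_of_isSuccLimit hlim
      refine ⟨1, one_pos, h1, updCc s hs 1 one_pos h1, rfl, ?_⟩
      rw [← hu]
      refine le_of_lt ?_
      rw [Ordinal.typein_lt_typein]
      refine ⟨ξ, ?_, ?_⟩
      · rw [updCc_spec, happly, if_neg hlt.ne']; exact hξlt
      · intro ζ hζ
        rw [updCc_spec, happly, if_neg (hlt.trans hζ).ne', ← hξeq ζ hζ]
end
end
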